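/- arXiv:1804.08418 — 3 statements merged into one kernel-verified Lean document; each statement's English description precedes it below -/
import Mathlib

section
/- Let A ∈ ℝ^{m×n}, C ∈ ℝ^{p×n}, and H := max_{J∈S(A;C)} H_J where H_J := max_{(y,w)∈(Aℝ^n)×ℝ^p, ‖(y,w)‖≤1} min{‖x‖ : Ax = y, C_J x ≤ w_J}. Then for all b ∈ ℝ^m, d ∈ ℝ^p such that {x : Ax = b, Cx ≤ d} is nonempty and all u ∈ ℝ^n, dist(u, {x : Ax = b, Cx ≤ d}) ≤ H · dist((b,d), (Au,Cu) + {0}×ℝ^p_+) ≤ H · ‖(Au−b, (Cu−d)_+)‖. -/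
open Matrix Metric

/-- The set-valued mapping `[A,C,J] : x ↦ (Ax, Cx) + {(0,s) : s_J ≥ 0}` is
relatively surjective: its image is a linear subspace. -/
def RelSurjAC {m p n : ℕ} (A : Matrix (Fin m) (Fin n) ℝ)
    (C : Matrix (Fin p) (Fin n) ℝ) (J : Set (Fin p)) : Prop :=
  ∃ W : Submodule ℝ ((Fin m → ℝ) × (Fin p → ℝ)),
    {q : (Fin m → ℝ) × (Fin p → ℝ) | ∃ x : Fin n → ℝ, ∃ s : Fin p → ℝ,
      (∀ i ∈ J, 0 ≤ s i) ∧ q = (A.mulVec x, C.mulVec x + s)} =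
    (W : Set ((Fin m → ℝ) × (Fin p → ℝ)))

/-- `H_J = max_{(y,w) ∈ (Aℝ^n)×ℝ^p, ‖(y,w)‖≤1} min{‖x‖ : Ax = y, C_J x ≤ w_J}`. -/
noncomputable def HJAC {m p n : ℕ} (A : Matrix (Fin m) (Fin n) ℝ)
    (C : Matrix (Fin p) (Fin n) ℝ) (J : Set (Fin p)) : ℝ :=
  sSup {t | ∃ yw : (Fin m → ℝ) × (Fin p → ℝ), (∃ x, yw.1 = A.mulVec x) ∧ ‖yw‖ ≤ 1 ∧
    t = sInf {r | ∃ x : Fin n → ℝ, A.mulVec x = yw.1 ∧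
      (∀ i ∈ J, C.mulVec x i ≤ yw.2 i) ∧ r = ‖x‖}}

/-- `H = max_{J ∈ S(A;C)} H_J`. -/
noncomputable def HoffAC {m p n : ℕ} (A : Matrix (Fin m) (Fin n) ℝ)
    (C : Matrix (Fin p) (Fin n) ℝ) : ℝ :=
  sSup {t | ∃ J : Set (Fin p), RelSurjAC A C J ∧ t = HJAC A C J}

/-!
Let `z` be a point of `P = {x | A x = b, C x ≤ d}` nearest to `u`. By convexity `z` is also
nearest to `u` on `z + T`, where `T` is the cone cut out by `A h = 0` and the inequalities active
at `z`. Separating `T` from the open ball around `u - z` and applying Farkas' lemma gives a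
multiplier `g = μ A - λ C`, with `λ ≥ 0` supported on the active set, such that `g h ≥ 0` forces
`dist u z ≤ dist u (z + h)`. A multiplier of minimal support `J` makes `[A,C,J]`
relatively surjective: otherwise some `C_i`, `i ∈ J`, is nonnegative on the recession cone of the
`J`-system, Farkas' lemma turns this into a nonnegative dependence among the rows of `C_J` modulo
those of `A`, and moving `λ` along it shrinks the support. Hence `dist(u, P)` is bounded by the
distance from `u` to the solutions of `A x = b, C_J x ≤ d_J`, which `H_J` controls in terms of the
residual `(b, d) - (A u, C u + s)` for any `s ≥ 0`.
-/

open Finset Function Filter Topology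

section ConicCombination

variable {G E : Type*} [Fintype G]

lemma exists_nonneg_sub_smul_support_ssubset {c d : G → ℝ} (hc : 0 ≤ c)
    (hd : support d ⊆ support c) (hpos : ∃ g, 0 < d g) :
    ∃ t : ℝ, 0 ≤ c - t • d ∧ support (c - t • d) ⊂ support c := by
  classical
  obtain ⟨g₀, hg₀, hmin⟩ := (univ.filter fun g => 0 < d g).exists_min_image
    (fun g => c g / d g) (by simpa [Finset.Nonempty] using hpos)
  have hdg₀ : 0 < d g₀ := (mem_filter.mp hg₀).2
  set t := c g₀ / d g₀
  have ht : 0 ≤ t := div_nonneg (hc g₀) hdg₀.le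
  refine ⟨t, fun g => ?_, ?_⟩
  · simp only [Pi.zero_apply, Pi.sub_apply, Pi.smul_apply, smul_eq_mul, sub_nonneg]
    rcases le_or_gt (d g) 0 with hg | hg
    · linarith [mul_nonpos_of_nonneg_of_nonpos ht hg, show 0 ≤ c g from hc g]
    · exact (le_div_iff₀ hg).mp (hmin g (by simp [hg]))
  · have hsub : support (c - t • d) ⊆ support c := fun g hg => by
      by_contra hcg
      have hdg : d g = 0 := by_contra fun h => hcg (hd h)
      simp_all
    refine (Set.ssubset_iff_of_subset hsub).mpr ⟨g₀, hd hdg₀.ne', ?_⟩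
    simp [t, div_mul_cancel₀ _ hdg₀.ne']

/-- Carathéodory's theorem for cones. -/
theorem exists_linearIndepOn_support [AddCommGroup E] [Module ℝ E] (w : G → E) {c : G → ℝ}
    (hc : 0 ≤ c) :
    ∃ c' : G → ℝ, 0 ≤ c' ∧ LinearIndepOn ℝ w (support c') ∧
      ∑ g, c' g • w g = ∑ g, c g • w g := by
  classical
  obtain ⟨c', ⟨hc', hsum⟩, hmin⟩ := (measure fun c' : G → ℝ => (support c').ncard).wf.has_min
    {c' | 0 ≤ c' ∧ ∑ g, c' g • w g = ∑ g, c g • w g} ⟨c, hc, rfl⟩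
  refine ⟨c', hc', ?_, hsum⟩
  by_contra hdep
  obtain ⟨d, hd, hdsum, hpos⟩ : ∃ d : G → ℝ, support d ⊆ support c' ∧
      ∑ g, d g • w g = 0 ∧ ∃ g, 0 < d g := by
    simp only [linearIndepOn_iff'', not_forall] at hdep
    obtain ⟨T, d, hT, hdT, hdsum, g, hg, hdg⟩ := hdep
    have hd : support d ⊆ support c' := fun g hg => hT (by_contra fun h => hg (hdT g h))
    have hdsum : ∑ g, d g • w g = 0 := by
      rw [← hdsum]; exact (sum_subset (subset_univ T) fun g _ h => by simp [hdT g h]).symm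
    rcases lt_or_gt_of_ne hdg with hneg | hpos
    · exact ⟨-d, by simpa using hd, by simp [neg_smul, hdsum], g, by simpa using hneg⟩
    · exact ⟨d, hd, hdsum, g, hpos⟩
  obtain ⟨t, ht, hlt⟩ := exists_nonneg_sub_smul_support_ssubset hc' hd hpos
  refine hmin _ ⟨ht, ?_⟩ (Set.ncard_lt_ncard hlt)
  simp [sub_smul, sum_sub_distrib, mul_smul, ← smul_sum, hdsum, hsum]

lemma sum_set_coe_eq_sum [AddCommMonoid E] {s : Set G} [Fintype s] {f : G → E}
    (hf : ∀ g ∉ s, f g = 0) : ∑ g : s, f g = ∑ g, f g := by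
  classical
  rw [sum_set_coe]
  exact sum_subset (subset_univ _) fun g _ hg => hf g (by simpa using hg)

theorem isClosed_image_Ici_linearCombination [NormedAddCommGroup E] [NormedSpace ℝ E]
    [FiniteDimensional ℝ E] (w : G → E) :
    IsClosed (Fintype.linearCombination ℝ w '' Set.Ici 0) := by
  classical
  have hunion : Fintype.linearCombination ℝ w '' Set.Ici 0 =
      ⋃ (s : Set G) (_ : LinearIndepOn ℝ w s),
        Fintype.linearCombination ℝ (fun g : s => w g) '' Set.Ici 0 := by
    ext v
    simp only [Set.mem_image, Set.mem_iUnion, Set.mem_Ici, exists_prop,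
      Fintype.linearCombination_apply]
    constructor
    · rintro ⟨c, hc, rfl⟩
      obtain ⟨c', hc', hli, hsum⟩ := exists_linearIndepOn_support w hc
      refine ⟨support c', hli, fun g => c' g, fun g => hc' g, ?_⟩
      rw [← hsum]
      exact sum_set_coe_eq_sum (f := fun g => c' g • w g) fun g hg => by
        simp [notMem_support.mp hg]
    · rintro ⟨s, -, c, hc, rfl⟩
      refine ⟨fun g => if h : g ∈ s then c ⟨g, h⟩ else 0, fun g => ?_, ?_⟩
      · by_cases h : g ∈ s
        · simpa [h] using hc ⟨g, h⟩
        · simp [h]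
      · rw [← sum_set_coe_eq_sum (s := s) fun g hg => by simp [hg]]
        exact Fintype.sum_congr _ _ fun g => by simp
  rw [hunion]
  refine isClosed_iUnion_of_finite fun s => isClosed_iUnion_of_finite fun hli => ?_
  exact (LinearMap.isClosedEmbedding_of_injective (LinearMap.ker_eq_bot.mpr
    hli.fintypeLinearCombination_injective)).isClosedMap _ isClosed_Ici

lemma nonneg_of_le_of_smul_mem [AddCommGroup E] [Module ℝ E] {K : Set E}
    (hK : ∀ t : ℝ, 0 < t → ∀ x ∈ K, t • x ∈ K) (f : E →ₗ[ℝ] ℝ) {s : ℝ}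
    (hs : ∀ x ∈ K, s ≤ f x) {x : E} (hx : x ∈ K) : 0 ≤ f x := by
  by_contra! hneg
  have ht : 0 < (|s| + 1) / -f x := div_pos (by positivity) (neg_pos.mpr hneg)
  have hfx : (|s| + 1) / -f x * f x = -(|s| + 1) := by
    have := hneg.ne
    field_simp
  have := hs _ (hK _ ht x hx)
  rw [map_smul, smul_eq_mul, hfx] at this
  linarith [neg_abs_le s]

end ConicCombination

section Farkas

variable {ι ι' κ : Type*} [Fintype ι] [Fintype ι'] [Fintype κ]

lemma exists_dotProduct_eq (f : (κ → ℝ) →ₗ[ℝ] ℝ) : ∃ y : κ → ℝ, ∀ x, f x = y ⬝ᵥ x := by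
  classical
  exact ⟨fun k => f fun j => if k = j then 1 else 0, fun x => by
    simp [LinearMap.pi_apply_eq_sum_univ f x, dotProduct, mul_comm]⟩

/-- **Farkas' lemma**. -/
theorem Matrix.exists_nonneg_vecMul_eq_of_mulVec_nonneg (W : Matrix ι κ ℝ) (f : κ → ℝ)
    (h : ∀ x, 0 ≤ W *ᵥ x → 0 ≤ f ⬝ᵥ x) : ∃ c, 0 ≤ c ∧ c ᵥ* W = f := by
  classical
  set L := Fintype.linearCombination ℝ W.row
  have hL : ∀ c, L c = c ᵥ* W := fun c => by
    rw [Fintype.linearCombination_apply, vecMul_eq_sum]; rfl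
  by_contra hf
  have hfS : f ∉ L '' Set.Ici 0 := fun ⟨c, hc, hcf⟩ => hf ⟨c, hc, by rw [← hL, hcf]⟩
  obtain ⟨φ, s, hφf, hφS⟩ := geometric_hahn_banach_point_closed
    ((convex_Ici 0).linear_image L) (isClosed_image_Ici_linearCombination _) hfS
  have hcone : ∀ t : ℝ, 0 < t → ∀ v ∈ L '' Set.Ici 0, t • v ∈ L '' Set.Ici 0 := by
    rintro t ht _ ⟨c, hc, rfl⟩
    exact ⟨t • c, Set.mem_Ici.mpr (smul_nonneg ht.le hc), map_smul L t c⟩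
  have hs : s < 0 := by simpa using hφS 0 ⟨0, Set.mem_Ici.mpr le_rfl, map_zero L⟩
  obtain ⟨x, hx⟩ : ∃ x : κ → ℝ, ∀ v, φ v = x ⬝ᵥ v :=
    exists_dotProduct_eq (φ : (κ → ℝ) →ₗ[ℝ] ℝ)
  have hWx : 0 ≤ W *ᵥ x := fun g => by
    have hg : Pi.single g 1 ᵥ* W ∈ L '' Set.Ici 0 :=
      ⟨Pi.single g 1, by simp [Pi.le_def, Pi.single_apply, apply_ite], hL _⟩
    have := nonneg_of_le_of_smul_mem hcone φ (fun v hv => (hφS v hv).le) hg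
    rw [ContinuousLinearMap.coe_coe, hx, dotProduct_comm, ← dotProduct_mulVec] at this
    simpa using this
  have hfx := h x hWx
  rw [dotProduct_comm, ← hx] at hfx
  linarith

theorem Matrix.exists_vecMul_sub_vecMul_eq (A : Matrix ι κ ℝ) (C : Matrix ι' κ ℝ) {J : Set ι'}
    {f : κ → ℝ} (hf : ∀ h, A *ᵥ h = 0 → (∀ i ∈ J, (C *ᵥ h) i ≤ 0) → 0 ≤ f ⬝ᵥ h) :
    ∃ μ lam, 0 ≤ lam ∧ support lam ⊆ J ∧ f = μ ᵥ* A - lam ᵥ* C := by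
  classical
  let χ : ι' → ℝ := J.indicator fun _ => 1
  let D : Matrix ι' κ ℝ := diagonal χ * C
  obtain ⟨c, hc, hcf⟩ := (A.fromRows ((-A).fromRows (-D))).exists_nonneg_vecMul_eq_of_mulVec_nonneg
    f fun h hh => by
      simp only [fromRows_mulVec, Pi.le_def, Sum.forall, Sum.elim_inl, Sum.elim_inr,
        Pi.zero_apply] at hh
      refine hf h (funext fun k => le_antisymm ?_ (hh.1 k)) fun i hi => ?_
      · simpa [neg_mulVec] using hh.2.1 k
      · simpa [D, χ, neg_mulVec, ← mulVec_mulVec, mulVec_diagonal, hi] using hh.2.2 i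
  refine ⟨c ∘ Sum.inl - c ∘ Sum.inr ∘ Sum.inl, c ∘ Sum.inr ∘ Sum.inr ᵥ* diagonal χ,
    fun i => ?_, fun i hi => ?_, ?_⟩
  · rw [vecMul_diagonal]
    exact mul_nonneg (hc _) (Set.indicator_nonneg (fun _ _ => zero_le_one) i)
  · by_contra hiJ
    exact hi (by simp [χ, vecMul_diagonal, hiJ])
  · rw [← hcf, vecMul_fromRows, vecMul_fromRows, sub_vecMul, vecMul_vecMul]
    simp [D, vecMul_neg, sub_eq_add_neg, add_assoc, Function.comp_assoc]

end Farkas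

section Hoffman

variable {m p n : ℕ} (A : Matrix (Fin m) (Fin n) ℝ) (C : Matrix (Fin p) (Fin n) ℝ)

lemma mulVec_add_norm_smul_eq_and_le {J : Set (Fin p)} {xh : Fin n → ℝ} (hA : A *ᵥ xh = 0)
    (hC : ∀ i ∈ J, (C *ᵥ xh) i ≤ -1) (x₀ : Fin n → ℝ) (w : Fin p → ℝ) :
    A *ᵥ (x₀ + ‖C *ᵥ x₀ - w‖ • xh) = A *ᵥ x₀ ∧
      ∀ i ∈ J, (C *ᵥ (x₀ + ‖C *ᵥ x₀ - w‖ • xh)) i ≤ w i := by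
  refine ⟨by simp [mulVec_add, mulVec_smul, hA], fun i hi => ?_⟩
  have hviol : (C *ᵥ x₀) i - w i ≤ ‖C *ᵥ x₀ - w‖ :=
    (le_abs_self _).trans (by simpa using norm_le_pi_norm (C *ᵥ x₀ - w) i)
  have := mul_le_mul_of_nonneg_left (hC i hi) (norm_nonneg (C *ᵥ x₀ - w))
  simp only [mulVec_add, mulVec_smul, Pi.add_apply, Pi.smul_apply, smul_eq_mul]
  linarith

theorem relSurjAC_iff {J : Set (Fin p)} :
    RelSurjAC A C J ↔ ∃ xh, A *ᵥ xh = 0 ∧ ∀ i ∈ J, (C *ᵥ xh) i ≤ -1 := by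
  constructor
  · rintro ⟨W, hW⟩
    have h1 : ((0, 1) : (Fin m → ℝ) × (Fin p → ℝ)) ∈ W := by
      rw [← SetLike.mem_coe, ← hW]
      exact ⟨0, 1, fun _ _ => zero_le_one, by simp⟩
    have h2 : ((0, -1) : (Fin m → ℝ) × (Fin p → ℝ)) ∈ (W : Set _) := by
      simpa using W.neg_mem h1
    rw [← hW] at h2
    obtain ⟨x, s, hs, heq⟩ := h2
    simp only [Prod.mk.injEq] at heq
    refine ⟨x, heq.1.symm, fun i hi => ?_⟩
    have := congrFun heq.2 i
    simp only [Pi.neg_apply, Pi.one_apply, Pi.add_apply] at this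
    linarith [hs i hi]
  · rintro ⟨xh, hA, hC⟩
    refine ⟨(LinearMap.range A.mulVecLin).prod ⊤, Set.ext fun q => ⟨?_, ?_⟩⟩
    · rintro ⟨x, s, -, rfl⟩
      exact ⟨⟨x, rfl⟩, trivial⟩
    · rintro ⟨⟨x₀, hx₀⟩, -⟩
      obtain ⟨hAx, hCx⟩ := mulVec_add_norm_smul_eq_and_le A C hA hC x₀ q.2
      refine ⟨x₀ + ‖C *ᵥ x₀ - q.2‖ • xh, q.2 - C *ᵥ (x₀ + ‖C *ᵥ x₀ - q.2‖ • xh),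
        fun i hi => by simpa using hCx i hi, ?_⟩
      rw [hAx, add_sub_cancel]
      exact Prod.ext hx₀.symm rfl

lemma exists_mem_forall_nonneg_of_not_relSurjAC {J : Set (Fin p)} (hJ : ¬ RelSurjAC A C J) :
    ∃ i₀ ∈ J, ∀ h, A *ᵥ h = 0 → (∀ i ∈ J, (C *ᵥ h) i ≤ 0) → 0 ≤ (C *ᵥ h) i₀ := by
  classical
  by_contra! hneg
  choose! h hA hC hlt using hneg
  -- the sum of the `h i`, each scaled so that `(C *ᵥ h i) i = -1`, is a recession direction
  set t : Fin p → ℝ := fun i => -((C *ᵥ h i) i)⁻¹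
  refine hJ ((relSurjAC_iff A C).mpr ⟨∑ i ∈ J.toFinset, t i • h i, ?_, fun k hk => ?_⟩)
  · rw [mulVec_sum]
    exact sum_eq_zero fun i hi => by rw [mulVec_smul, hA i (Set.mem_toFinset.mp hi), smul_zero]
  · have hk' : k ∈ J.toFinset := Set.mem_toFinset.mpr hk
    have hterm : ∀ i ∈ J.toFinset, t i * (C *ᵥ h i) k ≤ 0 := fun i hi => by
      rw [Set.mem_toFinset] at hi
      exact mul_nonpos_of_nonneg_of_nonpos (by simpa [t] using (hlt i hi).le) (hC i hi k hk)
    have htk : t k * (C *ᵥ h k) k = -1 := by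
      simp [t, inv_mul_cancel₀ (hlt k hk).ne]
    rw [mulVec_sum, Finset.sum_apply, ← add_sum_erase _ _ hk']
    simp only [mulVec_smul, Pi.smul_apply, smul_eq_mul]
    linarith [sum_nonpos (s := J.toFinset.erase k) fun i hi => hterm i (mem_of_mem_erase hi)]

theorem exists_relSurjAC_support {f : Fin n → ℝ} {μ : Fin m → ℝ} {lam : Fin p → ℝ}
    (hlam : 0 ≤ lam) (hf : f = μ ᵥ* A - lam ᵥ* C) :
    ∃ μ' lam', 0 ≤ lam' ∧ support lam' ⊆ support lam ∧ f = μ' ᵥ* A - lam' ᵥ* C ∧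
      RelSurjAC A C (support lam') := by
  classical
  obtain ⟨⟨μ', lam'⟩, ⟨hlam', hsupp, hf'⟩, hmin⟩ :=
    (measure fun q : (Fin m → ℝ) × (Fin p → ℝ) => (support q.2).ncard).wf.has_min
      {q | 0 ≤ q.2 ∧ support q.2 ⊆ support lam ∧ f = q.1 ᵥ* A - q.2 ᵥ* C}
      ⟨(μ, lam), hlam, subset_rfl, hf⟩
  refine ⟨μ', lam', hlam', hsupp, hf', ?_⟩
  by_contra hJ
  obtain ⟨i₀, hi₀, himp⟩ := exists_mem_forall_nonneg_of_not_relSurjAC A C hJ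
  obtain ⟨μ'', lam'', hlam'', hsupp'', hrow⟩ :=
    A.exists_vecMul_sub_vecMul_eq C (f := C i₀) fun h hA hC => himp h hA hC
  -- a nonnegative dependence `ν C = μ'' A` within `support lam'`, along which `lam'` shrinks
  set ν := lam'' + Pi.single i₀ 1
  have hν : ν ᵥ* C = μ'' ᵥ* A := by
    rw [add_vecMul, single_one_vecMul, row, hrow]; abel
  have hνpos : 0 < ν i₀ := by simp [ν, add_pos_of_nonneg_of_pos (hlam'' i₀) one_pos]
  have hνsupp : support ν ⊆ support lam' := by
    refine (support_add _ _).trans (Set.union_subset hsupp'' ?_)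
    exact Pi.support_single_subset.trans (Set.singleton_subset_iff.mpr hi₀)
  obtain ⟨t, ht, hlt⟩ := exists_nonneg_sub_smul_support_ssubset hlam' hνsupp ⟨i₀, hνpos⟩
  refine hmin (μ' - t • μ'', lam' - t • ν) ⟨ht, hlt.subset.trans hsupp, ?_⟩
    (Set.ncard_lt_ncard hlt)
  rw [hf', sub_vecMul, sub_vecMul, smul_vecMul, smul_vecMul, hν]
  abel

lemma isClosed_setOf_mulVec_eq_and_le (b : Fin m → ℝ) (d : Fin p → ℝ) :
    IsClosed {x : Fin n → ℝ | A *ᵥ x = b ∧ ∀ i, (C *ᵥ x) i ≤ d i} := by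
  have hA : Continuous fun x : Fin n → ℝ => A *ᵥ x := continuous_const.matrix_mulVec continuous_id
  have hC : Continuous fun x : Fin n → ℝ => C *ᵥ x := continuous_const.matrix_mulVec continuous_id
  rw [Set.ofPred_and, Set.ofPred_forall]
  exact (isClosed_eq hA continuous_const).inter
    (isClosed_iInter fun i => isClosed_le ((continuous_apply i).comp hC) continuous_const)

/-- By convexity, a better point `z + h` would give a better point `z + t h` of the polyhedron
for small `t > 0`. -/
lemma dist_le_dist_add_of_forall_dist_le {b : Fin m → ℝ} {d : Fin p → ℝ} {u z : Fin n → ℝ}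
    (hz : A *ᵥ z = b ∧ ∀ i, (C *ᵥ z) i ≤ d i)
    (hmin : ∀ x, A *ᵥ x = b → (∀ i, (C *ᵥ x) i ≤ d i) → dist u z ≤ dist u x)
    {h : Fin n → ℝ} (hAh : A *ᵥ h = 0) (hCh : ∀ i, (C *ᵥ z) i = d i → (C *ᵥ h) i ≤ 0) :
    dist u z ≤ dist u (z + h) := by
  have hev : ∀ᶠ t in 𝓝[>] (0 : ℝ), ∀ i, (C *ᵥ (z + t • h)) i ≤ d i := by
    refine Filter.eventually_all.mpr fun i => ?_
    simp only [mulVec_add, mulVec_smul, Pi.add_apply, Pi.smul_apply, smul_eq_mul]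
    rcases (hz.2 i).lt_or_eq with hlt | heq
    · have hcont : Tendsto (fun t : ℝ => (C *ᵥ z) i + t * (C *ᵥ h) i) (𝓝[>] 0)
          (𝓝 ((C *ᵥ z) i)) := by
        refine tendsto_nhdsWithin_of_tendsto_nhds ?_
        simpa using (continuous_const.add (continuous_id.mul continuous_const)).tendsto
          (f := fun t : ℝ => (C *ᵥ z) i + t * (C *ᵥ h) i) 0
      exact (hcont.eventually (gt_mem_nhds hlt)).mono fun t ht => ht.le
    · filter_upwards [self_mem_nhdsWithin] with t (ht : 0 < t)
      nlinarith [hCh i heq]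
  obtain ⟨t, hCt, ht0, ht1⟩ := (hev.and (Ioo_mem_nhdsGT one_pos)).exists
  have hle := hmin (z + t • h) (by simp [mulVec_add, mulVec_smul, hz.1, hAh]) hCt
  have hconv : dist u (z + t • h) ≤ (1 - t) * dist u z + t * dist u (z + h) := by
    simp only [dist_eq_norm]
    calc ‖u - (z + t • h)‖ = ‖(1 - t) • (u - z) + t • (u - (z + h))‖ := by congr 1; module
      _ ≤ (1 - t) * ‖u - z‖ + t * ‖u - (z + h)‖ := by
        refine (norm_add_le _ _).trans (le_of_eq ?_)
        rw [norm_smul, norm_smul, Real.norm_of_nonneg (by linarith), Real.norm_of_nonneg ht0.le]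
  nlinarith

theorem exists_multiplier_of_forall_dist_le {b : Fin m → ℝ} {d : Fin p → ℝ} {u z : Fin n → ℝ}
    (hz : A *ᵥ z = b ∧ ∀ i, (C *ᵥ z) i ≤ d i)
    (hmin : ∀ x, A *ᵥ x = b → (∀ i, (C *ᵥ x) i ≤ d i) → dist u z ≤ dist u x) :
    ∃ μ lam, 0 ≤ lam ∧ support lam ⊆ {i | (C *ᵥ z) i = d i} ∧
      ∀ h, 0 ≤ (μ ᵥ* A - lam ᵥ* C) ⬝ᵥ h → dist u z ≤ dist u (z + h) := by
  set K := {h : Fin n → ℝ | A *ᵥ h = 0 ∧ ∀ i ∈ {i | (C *ᵥ z) i = d i}, (C *ᵥ h) i ≤ 0}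
  have hdisj : Disjoint (ball (u - z) (dist u z)) K := by
    refine Set.disjoint_left.mpr fun h hball hK => ?_
    have := dist_le_dist_add_of_forall_dist_le A C hz hmin hK.1 hK.2
    rw [mem_ball, ← dist_add_left z, add_sub_cancel, dist_comm] at hball
    linarith
  have hKconv : Convex ℝ K := by
    rintro h₁ ⟨hA₁, hC₁⟩ h₂ ⟨hA₂, hC₂⟩ a c ha hc -
    refine ⟨by simp [mulVec_add, mulVec_smul, hA₁, hA₂], fun i hi => ?_⟩
    simp only [mulVec_add, mulVec_smul, Pi.add_apply, Pi.smul_apply, smul_eq_mul]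
    nlinarith [hC₁ i hi, hC₂ i hi]
  have hKcone : ∀ t : ℝ, 0 < t → ∀ h ∈ K, t • h ∈ K := by
    rintro t ht h ⟨hA, hC⟩
    refine ⟨by simp [mulVec_smul, hA], fun i hi => ?_⟩
    simpa [mulVec_smul] using mul_nonpos_of_nonneg_of_nonpos ht.le (hC i hi)
  obtain ⟨φ, s, hφball, hφK⟩ :=
    geometric_hahn_banach_open (convex_ball _ _) isOpen_ball hKconv hdisj
  obtain ⟨g, hg⟩ : ∃ g : Fin n → ℝ, ∀ h, φ h = g ⬝ᵥ h :=
    exists_dotProduct_eq (φ : (Fin n → ℝ) →ₗ[ℝ] ℝ)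
  obtain ⟨μ, lam, hlam, hsupp, hgeq⟩ := A.exists_vecMul_sub_vecMul_eq C (f := g)
    fun h hA hC => by simpa [hg] using nonneg_of_le_of_smul_mem hKcone φ hφK ⟨hA, hC⟩
  refine ⟨μ, lam, hlam, hsupp, fun h hh => ?_⟩
  have hs : s ≤ 0 := by simpa using hφK 0 ⟨mulVec_zero _, by simp⟩
  have hball : h ∉ ball (u - z) (dist u z) := fun hb =>
    (hφball h hb).not_ge (hs.trans (by rwa [hg, hgeq]))
  rwa [mem_ball, not_lt, ← dist_add_left z h, add_sub_cancel, dist_comm (z + h)] at hball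

theorem exists_relSurjAC_infDist_le {b : Fin m → ℝ} {d : Fin p → ℝ}
    (hP : {x : Fin n → ℝ | A *ᵥ x = b ∧ ∀ i, (C *ᵥ x) i ≤ d i}.Nonempty) (u : Fin n → ℝ) :
    ∃ J, RelSurjAC A C J ∧ ∀ x, A *ᵥ x = b → (∀ i ∈ J, (C *ᵥ x) i ≤ d i) →
      infDist u {x | A *ᵥ x = b ∧ ∀ i, (C *ᵥ x) i ≤ d i} ≤ dist u x := by
  obtain ⟨z, hz, hdist⟩ := (isClosed_setOf_mulVec_eq_and_le A C b d).exists_infDist_eq_dist hP u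
  obtain ⟨μ, lam, hlam, hsupp, hmult⟩ := exists_multiplier_of_forall_dist_le A C hz
    fun x hA hC => by rw [← hdist]; exact infDist_le_dist_of_mem ⟨hA, hC⟩
  obtain ⟨μ', lam', hlam', hsupp', hgeq, hJ⟩ := exists_relSurjAC_support A C hlam rfl
  refine ⟨support lam', hJ, fun x hAx hCx => ?_⟩
  have hdot : 0 ≤ (μ' ᵥ* A - lam' ᵥ* C) ⬝ᵥ (x - z) := by
    rw [sub_dotProduct, ← dotProduct_mulVec, ← dotProduct_mulVec, mulVec_sub, hAx, hz.1,
      sub_self, dotProduct_zero, zero_sub, neg_nonneg]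
    refine sum_nonpos fun i _ => ?_
    by_cases hi : i ∈ support lam'
    · refine mul_nonpos_of_nonneg_of_nonpos (hlam' i) ?_
      rw [mulVec_sub, Pi.sub_apply, show (C *ᵥ z) i = d i from hsupp (hsupp' hi)]
      linarith [hCx i hi]
    · simp [notMem_support.mp hi]
  simpa [hdist] using hmult (x - z) (hgeq ▸ hdot)

lemma exists_mulVec_eq_norm_le :
    ∃ K, 0 ≤ K ∧ ∀ x : Fin n → ℝ, ∃ x₀, A *ᵥ x₀ = A *ᵥ x ∧ ‖x₀‖ ≤ K * ‖A *ᵥ x‖ := by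
  obtain ⟨K, hK, hpre⟩ := (LinearMap.toContinuousLinearMap A.mulVecLin.rangeRestrict)
    |>.exists_preimage_norm_le (LinearMap.surjective_rangeRestrict _)
  refine ⟨K, hK.le, fun x => ?_⟩
  obtain ⟨x₀, hx₀, hnorm⟩ := hpre ⟨A *ᵥ x, x, rfl⟩
  exact ⟨x₀, congrArg Subtype.val hx₀, hnorm⟩

lemma sInf_le_HJAC {J : Set (Fin p)} (hJ : RelSurjAC A C J) {y : Fin m → ℝ} {w : Fin p → ℝ}
    (hy : ∃ x, y = A *ᵥ x) (hyw : ‖(y, w)‖ ≤ 1) :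
    sInf {r | ∃ x, A *ᵥ x = y ∧ (∀ i ∈ J, (C *ᵥ x) i ≤ w i) ∧ r = ‖x‖} ≤ HJAC A C J := by
  refine le_csSup ?_ ⟨(y, w), hy, hyw, rfl⟩
  obtain ⟨xh, hA, hC⟩ := (relSurjAC_iff A C).mp hJ
  obtain ⟨K, hK, hpre⟩ := exists_mulVec_eq_norm_le A
  obtain ⟨K', hK'0, hK'⟩ := (LinearMap.toContinuousLinearMap C.mulVecLin).bound
  refine ⟨K + (K' * K + 1) * ‖xh‖, ?_⟩
  rintro _ ⟨⟨_, w⟩, ⟨x, rfl⟩, hyw, rfl⟩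
  obtain ⟨x₀, hAx₀, hx₀⟩ := hpre x
  have hx₀K : ‖x₀‖ ≤ K := hx₀.trans (mul_le_of_le_one_right hK ((norm_fst_le _).trans hyw))
  have hCx₀ : ‖C *ᵥ x₀‖ ≤ K' * ‖x₀‖ := by simpa using hK' x₀
  obtain ⟨hAx, hCx⟩ := mulVec_add_norm_smul_eq_and_le A C hA hC x₀ w
  have hmem : ‖x₀ + ‖C *ᵥ x₀ - w‖ • xh‖ ∈
      {r | ∃ x', A *ᵥ x' = A *ᵥ x ∧ (∀ i ∈ J, (C *ᵥ x') i ≤ w i) ∧ r = ‖x'‖} :=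
    ⟨_, hAx.trans hAx₀, hCx, rfl⟩
  refine (csInf_le ⟨0, ?_⟩ hmem).trans ?_
  · rintro _ ⟨x, -, -, rfl⟩
    exact norm_nonneg x
  calc ‖x₀ + ‖C *ᵥ x₀ - w‖ • xh‖ ≤ ‖x₀‖ + ‖C *ᵥ x₀ - w‖ * ‖xh‖ :=
        (norm_add_le _ _).trans_eq (by rw [norm_smul, norm_norm])
    _ ≤ K + (K' * K + 1) * ‖xh‖ := by
      gcongr
      calc ‖C *ᵥ x₀ - w‖ ≤ ‖C *ᵥ x₀‖ + ‖w‖ := norm_sub_le _ _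
        _ ≤ K' * K + 1 := add_le_add (hCx₀.trans (by gcongr)) ((norm_snd_le _).trans hyw)

lemma le_HJAC_mul_norm {J : Set (Fin p)} (hJ : RelSurjAC A C J) {y : Fin m → ℝ}
    {w : Fin p → ℝ} (hy : ∃ x, y = A *ᵥ x) {a : ℝ}
    (ha : ∀ x, A *ᵥ x = y → (∀ i ∈ J, (C *ᵥ x) i ≤ w i) → a ≤ ‖x‖) :
    a ≤ HJAC A C J * ‖(y, w)‖ := by
  obtain ⟨x₀, rfl⟩ := hy
  rcases (norm_nonneg (A *ᵥ x₀, w)).eq_or_lt with h0 | hpos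
  · obtain ⟨hy0, rfl⟩ := Prod.ext_iff.mp (norm_eq_zero.mp h0.symm)
    rw [← h0, mul_zero]
    simpa using ha 0 (by simpa using hy0.symm) (by simp)
  set ρ := ‖(A *ᵥ x₀, w)‖
  obtain ⟨xh, hA, hC⟩ := (relSurjAC_iff A C).mp hJ
  have hle : a / ρ ≤ sInf {r | ∃ x, A *ᵥ x = ρ⁻¹ • A *ᵥ x₀ ∧
      (∀ i ∈ J, (C *ᵥ x) i ≤ (ρ⁻¹ • w) i) ∧ r = ‖x‖} := by
    obtain ⟨hAx, hCx⟩ := mulVec_add_norm_smul_eq_and_le A C hA hC (ρ⁻¹ • x₀) (ρ⁻¹ • w)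
    refine le_csInf ⟨_, _, hAx.trans (mulVec_smul _ _ _), hCx, rfl⟩ ?_
    rintro _ ⟨x, hAx, hCx, rfl⟩
    rw [div_le_iff₀ hpos]
    have := ha (ρ • x) (by rw [mulVec_smul, hAx, smul_inv_smul₀ hpos.ne']) fun i hi => by
      have := mul_le_mul_of_nonneg_left (hCx i hi) hpos.le
      simpa [mulVec_smul, mul_inv_cancel_left₀ hpos.ne'] using this
    rwa [norm_smul, Real.norm_of_nonneg hpos.le, mul_comm] at this
  have hH := sInf_le_HJAC A C hJ (y := ρ⁻¹ • A *ᵥ x₀) (w := ρ⁻¹ • w)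
    ⟨ρ⁻¹ • x₀, (mulVec_smul _ _ _).symm⟩ (by
      rw [← Prod.smul_mk, norm_smul, Real.norm_of_nonneg (inv_nonneg.mpr hpos.le),
        inv_mul_cancel₀ hpos.ne'])
  rw [div_le_iff₀ hpos] at hle
  exact hle.trans (mul_le_mul_of_nonneg_right hH hpos.le)

lemma HJAC_nonneg (J : Set (Fin p)) : 0 ≤ HJAC A C J :=
  Real.sSup_nonneg fun _ ⟨_, _, _, ht⟩ =>
    ht ▸ Real.sInf_nonneg fun _ ⟨x, _, _, hr⟩ => hr ▸ norm_nonneg x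

lemma HoffAC_nonneg : 0 ≤ HoffAC A C :=
  Real.sSup_nonneg fun _ ⟨J, _, ht⟩ => ht ▸ HJAC_nonneg A C J

lemma HJAC_le_HoffAC {J : Set (Fin p)} (hJ : RelSurjAC A C J) : HJAC A C J ≤ HoffAC A C :=
  le_csSup ((Set.finite_range (HJAC A C)).subset (by rintro _ ⟨J, -, rfl⟩; exact ⟨J, rfl⟩)).bddAbove
    ⟨J, hJ, rfl⟩

lemma infDist_le_norm_sub_max (b : Fin m → ℝ) (d : Fin p → ℝ) (u : Fin n → ℝ) :
    infDist (b, d) {q : (Fin m → ℝ) × (Fin p → ℝ) | ∃ s : Fin p → ℝ,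
      (∀ i, 0 ≤ s i) ∧ q = (A *ᵥ u, C *ᵥ u + s)} ≤
        ‖(A *ᵥ u - b, fun i => max ((C *ᵥ u) i - d i) 0)‖ := by
  have hq : (A *ᵥ u, C *ᵥ u + fun i => max (d i - (C *ᵥ u) i) 0) ∈
      {q : (Fin m → ℝ) × (Fin p → ℝ) | ∃ s : Fin p → ℝ,
        (∀ i, 0 ≤ s i) ∧ q = (A *ᵥ u, C *ᵥ u + s)} :=
    ⟨_, fun i => le_max_right _ _, rfl⟩
  refine (infDist_le_dist_of_mem hq).trans_eq ?_
  rw [dist_eq_norm, ← norm_neg]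
  refine congrArg norm (Prod.ext (by simp) (funext fun i => ?_))
  simp only [Prod.snd_neg, Prod.snd_sub, Pi.neg_apply, Pi.sub_apply, Pi.add_apply]
  rw [max_def, max_def]
  split_ifs <;> linarith

end Hoffman

lemma Metric.le_mul_infDist {α : Type*} [PseudoMetricSpace α] {s : Set α} {x : α} {a c : ℝ}
    (hc : 0 ≤ c) (hs : s.Nonempty) (h : ∀ y ∈ s, a ≤ c * dist x y) : a ≤ c * infDist x s := by
  have : Nonempty s := hs.to_subtype
  rw [infDist_eq_iInf, Real.mul_iInf_of_nonneg hc]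
  exact le_ciInf fun y => h y y.2

/-- Proposition 5, bound part: for all `b, d` with
`{x : Ax = b, Cx ≤ d} ≠ ∅` and all `u`,
`dist(u, {x : Ax = b, Cx ≤ d}) ≤ H · dist((b,d), (Au,Cu) + {0}×ℝ^p_+)
  ≤ H · ‖(Au−b, (Cu−d)_+)‖`. -/
theorem hoffman_eq_ineq_bound {m p n : ℕ} (A : Matrix (Fin m) (Fin n) ℝ)
    (C : Matrix (Fin p) (Fin n) ℝ) (b : Fin m → ℝ) (d : Fin p → ℝ)
    (hP : {x : Fin n → ℝ | A.mulVec x = b ∧ ∀ i, C.mulVec x i ≤ d i}.Nonempty)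
    (u : Fin n → ℝ) :
    infDist u {x : Fin n → ℝ | A.mulVec x = b ∧ ∀ i, C.mulVec x i ≤ d i} ≤
      HoffAC A C * infDist (b, d)
        {q : (Fin m → ℝ) × (Fin p → ℝ) | ∃ s : Fin p → ℝ,
          (∀ i, 0 ≤ s i) ∧ q = (A.mulVec u, C.mulVec u + s)} ∧
    HoffAC A C * infDist (b, d)
        {q : (Fin m → ℝ) × (Fin p → ℝ) | ∃ s : Fin p → ℝ,
          (∀ i, 0 ≤ s i) ∧ q = (A.mulVec u, C.mulVec u + s)} ≤
      HoffAC A C *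
        ‖((A.mulVec u - b, fun i => max (C.mulVec u i - d i) 0) :
          (Fin m → ℝ) × (Fin p → ℝ))‖ := by
  obtain ⟨J, hJ, hJP⟩ := exists_relSurjAC_infDist_le A C hP u
  obtain ⟨x₀, hx₀A, -⟩ := hP
  refine ⟨le_mul_infDist (HoffAC_nonneg A C) ⟨_, 0, fun _ => le_rfl, rfl⟩ ?_,
    mul_le_mul_of_nonneg_left ?_ (HoffAC_nonneg A C)⟩
  · rintro _ ⟨s, hs, rfl⟩
    rw [dist_eq_norm, Prod.mk_sub_mk]
    refine (le_HJAC_mul_norm A C hJ ⟨x₀ - u, by rw [mulVec_sub, hx₀A]⟩ fun x hAx hCx => ?_).trans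
      (mul_le_mul_of_nonneg_right (HJAC_le_HoffAC A C hJ) (norm_nonneg _))
    rw [← dist_self_add_right x u]
    refine hJP (u + x) (by rw [mulVec_add, hAx, add_sub_cancel]) fun i hi => ?_
    have := hCx i hi
    simp only [Pi.sub_apply, Pi.add_apply] at this
    rw [mulVec_add, Pi.add_apply]
    linarith [hs i]
  · exact infDist_le_norm_sub_max A C b d u
end

section
/- Let A ∈ ℝ^{m×n}, C ∈ ℝ^{p×n}, and H := max_{J∈S(A;C)} H_J where H_J := max_{w∈ℝ^p, ‖w‖≤1} min{‖x‖ : Ax = 0, C_J x ≤ w_J}. Then for all b ∈ ℝ^m, d ∈ ℝ^p such that {x : Ax = b, Cx ≤ d} is nonempty, and all u with Au = b, dist(u, {x : Ax = b, Cx ≤ d}) ≤ H · dist(d, Cu + ℝ^p_+) ≤ H · ‖(Cu − d)_+‖. -/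
/-!
Separate the ball `B(u, dist(u, P))` from `P = {Ax = b, Cx ≤ d}` by a linear functional and
write the separating inequality, by Farkas' lemma, as a nonnegative combination of the
constraints. A combination of smallest support uses only a subsystem `J` of the inequalities
that has a Slater point, so `[A,C,J]` is relatively surjective. If `v ≥ Cu` is nearest to `d`
and `w = (d - v)/‖d - v‖`, every `x` with `Ax = 0`, `C_J x ≤ w_J` gives a point `u + ‖d - v‖ x`
satisfying the subsystem, hence outside the ball; so `dist(u, P) ≤ ‖d - v‖ H_J`.
-/

open Matrix Metric

/-- `H_J = max_{w ∈ ℝ^p, ‖w‖≤1} min{‖x‖ : Ax = 0, C_J x ≤ w_J}`. -/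
noncomputable def HJeq {m p n : ℕ} (A : Matrix (Fin m) (Fin n) ℝ)
    (C : Matrix (Fin p) (Fin n) ℝ) (J : Set (Fin p)) : ℝ :=
  sSup {t | ∃ w : Fin p → ℝ, ‖w‖ ≤ 1 ∧
    t = sInf {r | ∃ x : Fin n → ℝ, A.mulVec x = 0 ∧
      (∀ i ∈ J, C.mulVec x i ≤ w i) ∧ r = ‖x‖}}

/-- `H = max_{J ∈ S(A;C)} H_J`. -/
noncomputable def HoffEq {m p n : ℕ} (A : Matrix (Fin m) (Fin n) ℝ)
    (C : Matrix (Fin p) (Fin n) ℝ) : ℝ :=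
  sSup {t | ∃ J : Set (Fin p), RelSurjAC A C J ∧ t = HJeq A C J}

section Farkas

variable {V : Type*} [AddCommGroup V] [Module ℝ V]

theorem farkas_projection {ι : Type*} (g₀ : V →ₗ[ℝ] ℝ) (g : ι → V →ₗ[ℝ] ℝ) (f : V →ₗ[ℝ] ℝ)
    {x₁ : V} (hx₁ : g₀ x₁ = 1) (h : ∀ x, g₀ x ≤ 0 → (∀ i, g i x ≤ 0) → f x ≤ 0) (x : V)
    (hx : ∀ i, (g i - g i x₁ • g₀) x ≤ 0) : (f - f x₁ • g₀) x ≤ 0 := by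
  have := h (x - g₀ x • x₁) (by simp [hx₁]) fun i => by simpa [mul_comm] using hx i
  simpa [mul_comm] using this

theorem farkas {ι : Type*} [Fintype ι] (g : ι → V →ₗ[ℝ] ℝ) (f : V →ₗ[ℝ] ℝ)
    (h : ∀ x, (∀ i, g i x ≤ 0) → f x ≤ 0) :
    ∃ lam : ι → ℝ, (∀ i, 0 ≤ lam i) ∧ ∀ x, f x = ∑ i, lam i * g i x := by
  revert g f
  refine Fintype.induction_empty_option (P := fun ι _ => ∀ (g : ι → V →ₗ[ℝ] ℝ) (f : V →ₗ[ℝ] ℝ),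
    (∀ x, (∀ i, g i x ≤ 0) → f x ≤ 0) → ∃ lam : ι → ℝ, (∀ i, 0 ≤ lam i) ∧
      ∀ x, f x = ∑ i, lam i * g i x) ?_ ?_ ?_ ι
  · intro α β _ e ih g f h
    let _ := Fintype.ofEquiv β e.symm
    obtain ⟨lam, hlam, hf⟩ := ih (g ∘ e) f fun x hx => h x fun i => by simpa using hx (e.symm i)
    exact ⟨lam ∘ e.symm, fun i => hlam _, fun x => by
      rw [hf]; exact Fintype.sum_equiv e _ _ fun i => by simp⟩
  · intro g f h
    refine ⟨0, fun _ => le_rfl, fun x => ?_⟩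
    simpa using le_antisymm (h x isEmptyElim) (by simpa using h (-x) isEmptyElim)
  · intro α _ ih g f h
    by_cases hc : ∀ x, (∀ i, g (some i) x ≤ 0) → f x ≤ 0
    · obtain ⟨lam, hlam, hf⟩ := ih (g ∘ some) f hc
      refine ⟨fun o => o.elim 0 lam, fun o => o.rec le_rfl hlam, fun x => ?_⟩
      simp [Fintype.sum_option, hf]
    -- Otherwise `g none` is needed: project onto its kernel along `x₁`, where `g none x₁ = 1`.
    push Not at hc
    obtain ⟨x₀, hgx₀, hfx₀⟩ := hc
    have hg₀x₀ : 0 < g none x₀ := by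
      by_contra! hle
      exact (h x₀ fun o => o.rec hle hgx₀).not_gt hfx₀
    set x₁ := (g none x₀)⁻¹ • x₀
    have hg₀x₁ : g none x₁ = 1 := by simp [x₁, hg₀x₀.ne']
    have hgx₁ : ∀ i, g (some i) x₁ ≤ 0 := fun i => by
      simpa [x₁] using mul_nonpos_of_nonneg_of_nonpos (inv_nonneg.2 hg₀x₀.le) (hgx₀ i)
    have hfx₁ : 0 < f x₁ := by simpa [x₁] using mul_pos (inv_pos.2 hg₀x₀) hfx₀
    obtain ⟨mu, hmu, hf⟩ := ih (fun i => g (some i) - g (some i) x₁ • g none)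
      (f - f x₁ • g none) (farkas_projection _ _ f hg₀x₁ fun x h₀ hx => h x (Option.rec h₀ hx))
    have hsum : ∑ i, mu i * g (some i) x₁ ≤ 0 :=
      Finset.sum_nonpos fun i _ => mul_nonpos_of_nonneg_of_nonpos (hmu i) (hgx₁ i)
    refine ⟨fun o => o.elim (f x₁ - ∑ i, mu i * g (some i) x₁) mu,
      fun o => o.rec (by simp only [Option.elim]; linarith) hmu, fun x => ?_⟩
    have := hf x
    simp only [LinearMap.sub_apply, LinearMap.smul_apply, smul_eq_mul, mul_sub,
      Finset.sum_sub_distrib, ← mul_assoc, ← Finset.sum_mul] at this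
    simp only [Fintype.sum_option, Option.elim, sub_mul]
    linarith

theorem farkas_with_equalities {ι κ : Type*} [Fintype ι] [Fintype κ] (g : ι → V →ₗ[ℝ] ℝ)
    (h : κ → V →ₗ[ℝ] ℝ) (f : V →ₗ[ℝ] ℝ)
    (hf : ∀ x, (∀ i, g i x ≤ 0) → (∀ k, h k x = 0) → f x ≤ 0) :
    ∃ (lam : ι → ℝ) (mu : κ → ℝ), (∀ i, 0 ≤ lam i) ∧
      ∀ x, f x = ∑ i, lam i * g i x + ∑ k, mu k * h k x := by
  obtain ⟨lam, hlam, hlamf⟩ := farkas (Sum.elim g (Sum.elim h (-h))) f fun x hx =>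
    hf x (fun i => hx (.inl i)) fun k => le_antisymm (hx (.inr (.inl k)))
      (by simpa using hx (.inr (.inr k)))
  refine ⟨fun i => lam (.inl i), fun k => lam (.inr (.inl k)) - lam (.inr (.inr k)),
    fun i => hlam _, fun x => ?_⟩
  simp only [hlamf, Fintype.sum_sum_type, Sum.elim_inl, Sum.elim_inr, Pi.neg_apply,
    LinearMap.neg_apply, mul_neg, Finset.sum_neg_distrib, sub_mul, Finset.sum_sub_distrib]
  ring

theorem farkas_affine {ι κ : Type*} [Fintype ι] [Fintype κ] (g : ι → V →ₗ[ℝ] ℝ) (β : ι → ℝ)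
    (h : κ → V →ₗ[ℝ] ℝ) (γ : κ → ℝ) (f : V →ₗ[ℝ] ℝ) (c : ℝ) {x₀ : V}
    (hg₀ : ∀ i, g i x₀ ≤ β i) (hh₀ : ∀ k, h k x₀ = γ k)
    (hf : ∀ x, (∀ i, g i x ≤ β i) → (∀ k, h k x = γ k) → f x ≤ c) :
    ∃ (lam : ι → ℝ) (mu : κ → ℝ), (∀ i, 0 ≤ lam i) ∧
      (∀ x, f x = ∑ i, lam i * g i x + ∑ k, mu k * h k x) ∧
      ∑ i, lam i * β i + ∑ k, mu k * γ k ≤ c := by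
  have hcone : ∀ x t, (∀ i, g i x ≤ t * β i) → 0 ≤ t → (∀ k, h k x = t * γ k) →
      f x ≤ t * c := by
    intro x t hgx ht hhx
    rcases ht.lt_or_eq with ht | rfl
    · have := hf (t⁻¹ • x) (fun i => ?_) fun k => ?_
      · simpa [ht.ne', inv_mul_le_iff₀ ht] using this
      · simpa [inv_mul_le_iff₀ ht] using hgx i
      · simp [hhx k, ht.ne']
    -- `x` is a recession direction of the feasible set, so `f` cannot increase along it.
    simp only [zero_mul] at hgx hhx ⊢
    by_contra! hfx
    have hc₀ := hf x₀ hg₀ hh₀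
    have := hf (x₀ + ((c - f x₀) / f x + 1) • x) (fun i => by
        simpa using add_le_add (hg₀ i)
          (mul_nonpos_of_nonneg_of_nonpos (by positivity : 0 ≤ (c - f x₀) / f x + 1) (hgx i)))
      fun k => by simp [hh₀ k, hhx k]
    simp only [map_add, map_smul, smul_eq_mul, add_mul, div_mul_cancel₀ _ hfx.ne'] at this
    linarith
  obtain ⟨lam, mu, hlam, hlamf⟩ := farkas_with_equalities
    (fun o : Option ι => o.elim (-LinearMap.snd ℝ V ℝ)
      fun i => g i ∘ₗ LinearMap.fst ℝ V ℝ - β i • LinearMap.snd ℝ V ℝ)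
    (fun k => h k ∘ₗ LinearMap.fst ℝ V ℝ - γ k • LinearMap.snd ℝ V ℝ)
    (f ∘ₗ LinearMap.fst ℝ V ℝ - c • LinearMap.snd ℝ V ℝ) fun ⟨x, t⟩ hx hh => by
      have := hcone x t (fun i => by simpa [mul_comm] using hx (some i))
        (by simpa using hx none) fun k => by simpa [sub_eq_zero, mul_comm] using hh k
      simpa [mul_comm] using this
  refine ⟨fun i => lam (some i), mu, fun i => hlam _, fun x => ?_, ?_⟩
  · simpa [Fintype.sum_option] using hlamf (x, 0)
  · have := hlamf (0, 1)
    simp only [LinearMap.sub_apply, LinearMap.smul_apply, LinearMap.comp_apply,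
      LinearMap.fst_apply, LinearMap.snd_apply, LinearMap.neg_apply, map_zero, smul_eq_mul,
      mul_one, zero_sub, mul_neg, Fintype.sum_option, Option.elim_none, Option.elim_some,
      Finset.sum_neg_distrib] at this
    linarith [hlam none]

end Farkas

section Polyhedra

open Finset

variable {m n p : Type*} [Fintype n] [Fintype p]
  (A : Matrix m n ℝ) (C : Matrix p n ℝ)

def IsSlaterPoint (J : Set p) (z : n → ℝ) : Prop :=
  A *ᵥ z = 0 ∧ ∀ i ∈ J, (C *ᵥ z) i ≤ -1

variable {A C}

theorem IsSlaterPoint.norm_smul_feasible {J : Set p} {z : n → ℝ} (hz : IsSlaterPoint A C J z)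
    (w : p → ℝ) : A *ᵥ (‖w‖ • z) = 0 ∧ ∀ i ∈ J, (C *ᵥ (‖w‖ • z)) i ≤ w i := by
  refine ⟨by simp [mulVec_smul, hz.1], fun i hi => ?_⟩
  have hwi : -‖w‖ ≤ w i := neg_le_of_abs_le (by simpa using norm_le_pi_norm w i)
  simpa [mulVec_smul] using (mul_le_mul_of_nonneg_left (hz.2 i hi) (norm_nonneg w)).trans
    (by simpa using hwi)

variable [Fintype m]

variable (A C) in
theorem exists_dual_of_forall_not_isSlaterPoint (J : Set p)
    (h : ∀ z, ¬ IsSlaterPoint A C J z) :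
    ∃ (lam : p → ℝ) (mu : m → ℝ), (∀ i, 0 ≤ lam i) ∧ (∀ i ∉ J, lam i = 0) ∧
      (∃ i, 0 < lam i) ∧ ∀ x, mu ⬝ᵥ A *ᵥ x + lam ⬝ᵥ C *ᵥ x = 0 := by
  classical
  -- Homogenize `C_J z ≤ -1` as `C_J z + t ≤ 0`: its solutions with `Az = 0` all have `t ≤ 0`.
  let g : p → ((n → ℝ) × ℝ →ₗ[ℝ] ℝ) := fun i =>
    if i ∈ J then LinearMap.proj i ∘ₗ C.mulVecLin ∘ₗ LinearMap.fst ℝ _ ℝ + LinearMap.snd ℝ _ ℝ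
    else 0
  have hg : ∀ i z t, g i (z, t) = if i ∈ J then (C *ᵥ z) i + t else 0 := by
    intro i z t
    by_cases hi : i ∈ J <;> simp [g, hi]
  obtain ⟨lam, mu, hlam, hlamf⟩ := farkas_with_equalities g
    (fun k => LinearMap.proj k ∘ₗ A.mulVecLin ∘ₗ LinearMap.fst ℝ _ ℝ) (LinearMap.snd ℝ _ ℝ)
    fun ⟨z, t⟩ hC hA => by
      by_contra! ht
      replace ht : 0 < t := ht
      refine h (t⁻¹ • z) ⟨?_, fun i hi => ?_⟩
      · ext k
        simpa [mulVec_smul, ht.ne'] using hA k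
      · have := hC i
        rw [hg, if_pos hi] at this
        simpa [mulVec_smul, inv_mul_le_iff₀ ht] using (by linarith : (C *ᵥ z) i ≤ -t)
  let lamJ : p → ℝ := fun i => if i ∈ J then lam i else 0
  have hsum : ∀ z t, ∑ i, lam i * g i (z, t) = lamJ ⬝ᵥ C *ᵥ z + t * ∑ i, lamJ i := by
    intro z t
    simp only [dotProduct, Finset.mul_sum, ← Finset.sum_add_distrib, hg]
    refine Finset.sum_congr rfl fun i _ => ?_
    by_cases hi : i ∈ J <;> simp [hi, lamJ, mul_add, mul_comm]
  have hone : ∑ i, lamJ i = 1 := by simpa [hsum] using (hlamf (0, 1)).symm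
  refine ⟨lamJ, mu, fun i => ?_, fun i hi => if_neg hi, ?_, fun x => ?_⟩
  · by_cases hi : i ∈ J <;> simp [lamJ, hi, hlam i]
  · simpa using Finset.exists_lt_of_sum_lt (s := Finset.univ) (f := 0) (g := lamJ)
      (by simp [hone])
  · simpa [hsum, dotProduct, add_comm] using (hlamf (x, 0)).symm

variable (A C) in
def IsDualCert (b : m → ℝ) (d : p → ℝ) (φ : (n → ℝ) →ₗ[ℝ] ℝ) (c : ℝ)
    (lam : p → ℝ) (mu : m → ℝ) : Prop :=
  (∀ i, 0 ≤ lam i) ∧ (∀ x, φ x = mu ⬝ᵥ A *ᵥ x + lam ⬝ᵥ C *ᵥ x) ∧ mu ⬝ᵥ b + lam ⬝ᵥ d ≤ c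

variable {b : m → ℝ} {d : p → ℝ} {φ : (n → ℝ) →ₗ[ℝ] ℝ} {c : ℝ} {x₀ : n → ℝ}

theorem exists_isDualCert (hAx₀ : A *ᵥ x₀ = b) (hCx₀ : ∀ i, (C *ᵥ x₀) i ≤ d i)
    (hφ : ∀ x, A *ᵥ x = b → (∀ i, (C *ᵥ x) i ≤ d i) → φ x ≤ c) :
    ∃ lam mu, IsDualCert A C b d φ c lam mu := by
  obtain ⟨lam, mu, hlam, hφ, hc⟩ := farkas_affine (fun i => LinearMap.proj i ∘ₗ C.mulVecLin) d
    (fun k => LinearMap.proj k ∘ₗ A.mulVecLin) b φ c hCx₀ (fun k => by simp [hAx₀])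
    fun x hC hA => hφ x (funext hA) hC
  exact ⟨lam, mu, hlam, fun x => by simp [hφ, dotProduct, add_comm], by
    simpa [dotProduct, add_comm] using hc⟩

theorem IsDualCert.apply_le {lam : p → ℝ} {mu : m → ℝ}
    (hcert : IsDualCert A C b d φ c lam mu) {x : n → ℝ} (hAx : A *ᵥ x = b)
    (hCx : ∀ i, lam i ≠ 0 → (C *ᵥ x) i ≤ d i) : φ x ≤ c := by
  have : lam ⬝ᵥ C *ᵥ x ≤ lam ⬝ᵥ d := Finset.sum_le_sum fun i _ => by
    by_cases hi : lam i = 0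
    · simp [hi]
    · exact mul_le_mul_of_nonneg_left (hCx i hi) (hcert.1 i)
  rw [hcert.2.1 x, hAx]
  linarith [hcert.2.2]

theorem IsDualCert.exists_card_support_lt {lam : p → ℝ} {mu : m → ℝ}
    (hcert : IsDualCert A C b d φ c lam mu) (hAx₀ : A *ᵥ x₀ = b)
    (hCx₀ : ∀ i, (C *ᵥ x₀) i ≤ d i) {lam' : p → ℝ} {mu' : m → ℝ}
    (hlam' : ∀ i, 0 ≤ lam' i) (hsupp : ∀ i, lam i = 0 → lam' i = 0) (hpos : ∃ i, 0 < lam' i)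
    (hker : ∀ x, mu' ⬝ᵥ A *ᵥ x + lam' ⬝ᵥ C *ᵥ x = 0) :
    ∃ lam₂ mu₂, IsDualCert A C b d φ c lam₂ mu₂ ∧ #{i | lam₂ i ≠ 0} < #{i | lam i ≠ 0} := by
  -- Subtract the largest multiple of `(lam', mu')` that keeps the multipliers nonnegative.
  obtain ⟨i₀, hi₀, hmin⟩ := Finset.exists_min_image {i | 0 < lam' i} (fun i => lam i / lam' i)
    (by simpa [Finset.Nonempty] using hpos)
  simp only [Finset.mem_filter, Finset.mem_univ, true_and] at hi₀ hmin
  set t := lam i₀ / lam' i₀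
  have ht : 0 ≤ t := div_nonneg (hcert.1 i₀) hi₀.le
  have hdual : 0 ≤ mu' ⬝ᵥ b + lam' ⬝ᵥ d := by
    have : lam' ⬝ᵥ C *ᵥ x₀ ≤ lam' ⬝ᵥ d :=
      Finset.sum_le_sum fun i _ => mul_le_mul_of_nonneg_left (hCx₀ i) (hlam' i)
    linarith [hAx₀ ▸ hker x₀]
  refine ⟨lam - t • lam', mu - t • mu', ⟨fun i => ?_, fun x => ?_, ?_⟩, Finset.card_lt_card ?_⟩
  · rcases (hlam' i).lt_or_eq with h | h
    · have := (le_div_iff₀ h).1 (hmin i h)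
      simp only [Pi.sub_apply, Pi.smul_apply, smul_eq_mul, sub_nonneg]
      linarith
    · simp [← h, hcert.1 i]
  · simp only [sub_dotProduct, smul_dotProduct, smul_eq_mul, hcert.2.1 x]
    linear_combination t * hker x
  · simp only [sub_dotProduct, smul_dotProduct, smul_eq_mul]
    nlinarith [hcert.2.2]
  · refine (Finset.ssubset_iff_of_subset fun i => ?_).2 ⟨i₀, ?_, ?_⟩
    · simp only [Finset.mem_filter, Finset.mem_univ, true_and]
      intro h h0
      simp [h0, hsupp i h0] at h
    · simp only [Finset.mem_filter, Finset.mem_univ, true_and]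
      exact fun h0 => hi₀.ne' (hsupp i₀ h0)
    · simp [t, div_mul_cancel₀ _ hi₀.ne']

theorem exists_isSlaterPoint_of_forall_le (hAx₀ : A *ᵥ x₀ = b) (hCx₀ : ∀ i, (C *ᵥ x₀) i ≤ d i)
    (hφ : ∀ x, A *ᵥ x = b → (∀ i, (C *ᵥ x) i ≤ d i) → φ x ≤ c) :
    ∃ J z, IsSlaterPoint A C J z ∧ ∀ x, A *ᵥ x = b → (∀ i ∈ J, (C *ᵥ x) i ≤ d i) → φ x ≤ c := by
  classical
  have hex : ∃ k, ∃ lam mu, IsDualCert A C b d φ c lam mu ∧ #{i | lam i ≠ 0} = k := by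
    obtain ⟨lam, mu, h⟩ := exists_isDualCert hAx₀ hCx₀ hφ
    exact ⟨_, lam, mu, h, rfl⟩
  -- A certificate of minimal support has a Slater point on its support: otherwise the
  -- alternative `exists_dual_of_forall_not_isSlaterPoint` would shrink the support.
  obtain ⟨lam, mu, hcert, hcard⟩ := Nat.find_spec hex
  refine ⟨{i | lam i ≠ 0}, ?_⟩
  by_contra hJ
  obtain ⟨lam', mu', hlam', hsupp, hpos, hker⟩ := exists_dual_of_forall_not_isSlaterPoint A C _
    fun z hz => hJ ⟨z, hz, fun x hAx hCx => hcert.apply_le hAx hCx⟩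
  obtain ⟨lam₂, mu₂, hcert₂, hlt⟩ := hcert.exists_card_support_lt hAx₀ hCx₀ hlam'
    (fun i hi => hsupp i (not_not.2 hi)) hpos hker
  exact (Nat.find_min' hex ⟨lam₂, mu₂, hcert₂, rfl⟩).not_gt (hcard ▸ hlt)

theorem exists_isSlaterPoint_infDist_le (hAx₀ : A *ᵥ x₀ = b)
    (hCx₀ : ∀ i, (C *ᵥ x₀) i ≤ d i) (u : n → ℝ) :
    ∃ J z, IsSlaterPoint A C J z ∧ ∀ q, A *ᵥ q = b → (∀ i ∈ J, (C *ᵥ q) i ≤ d i) →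
      infDist u {x | A *ᵥ x = b ∧ ∀ i, (C *ᵥ x) i ≤ d i} ≤ dist q u := by
  have hconv : Convex ℝ {x | A *ᵥ x = b ∧ ∀ i, (C *ᵥ x) i ≤ d i} :=
    ((convex_singleton b).linear_preimage A.mulVecLin).inter
      ((convex_Iic d).linear_preimage C.mulVecLin)
  obtain ⟨f, r, hball, hP⟩ :=
    geometric_hahn_banach_open (convex_ball u _) isOpen_ball hconv disjoint_ball_infDist
  obtain ⟨J, z, hz, hJ⟩ := exists_isSlaterPoint_of_forall_le (φ := -f.toLinearMap) (c := -r)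
    hAx₀ hCx₀ fun x hAx hCx => by simpa using hP x ⟨hAx, hCx⟩
  refine ⟨J, z, hz, fun q hAq hCq => not_lt.1 fun hq => ?_⟩
  have hfq := hJ q hAq hCq
  simp only [LinearMap.neg_apply, ContinuousLinearMap.coe_coe, neg_le_neg_iff] at hfq
  exact (hball q (mem_ball.2 hq)).not_ge hfq

end Polyhedra

theorem setOf_exists_nonneg_add_eq_Ici {ι : Type*} (a : ι → ℝ) :
    {w | ∃ s : ι → ℝ, (∀ i, 0 ≤ s i) ∧ w = a + s} = Set.Ici a := by
  ext w
  refine ⟨?_, fun hw => ⟨w - a, fun i => sub_nonneg.2 (hw i), by abel⟩⟩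
  rintro ⟨s, hs, rfl⟩
  exact fun i => le_add_of_nonneg_right (hs i)

theorem infDist_Ici_le_norm_posPart {ι : Type*} [Fintype ι] (a d : ι → ℝ) :
    infDist d (Set.Ici a) ≤ ‖(fun i => max (a i - d i) 0 : ι → ℝ)‖ := by
  refine (infDist_le_dist_of_mem (y := d + fun i => max (a i - d i) 0) fun i => ?_).trans_eq ?_
  · have := le_max_left (a i - d i) 0
    simp only [Pi.add_apply]
    linarith
  · rw [dist_eq_norm, sub_add_cancel_left, norm_neg]

section Hoffman

variable {m p n : ℕ} {A : Matrix (Fin m) (Fin n) ℝ} {C : Matrix (Fin p) (Fin n) ℝ}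
  {b : Fin m → ℝ} {d : Fin p → ℝ}

theorem relSurjAC_of_isSlaterPoint {J : Set (Fin p)} {z : Fin n → ℝ}
    (hz : IsSlaterPoint A C J z) : RelSurjAC A C J := by
  let L : (Fin n → ℝ) × (Fin p → ℝ) →ₗ[ℝ] (Fin m → ℝ) × (Fin p → ℝ) :=
    (A.mulVecLin ∘ₗ LinearMap.fst ℝ _ _).prod
      (C.mulVecLin ∘ₗ LinearMap.fst ℝ _ _ + LinearMap.snd ℝ _ _)
  refine ⟨LinearMap.range L, Set.ext fun q => ⟨?_, ?_⟩⟩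
  · rintro ⟨x, s, -, rfl⟩
    exact ⟨(x, s), rfl⟩
  · -- Moving along `z` makes the slack as large as needed on `J`.
    rintro ⟨⟨x, s⟩, rfl⟩
    obtain ⟨hAz, hCz⟩ := hz.norm_smul_feasible s
    refine ⟨x + ‖s‖ • z, s - C *ᵥ (‖s‖ • z), fun i hi => ?_, ?_⟩
    · simpa using hCz i hi
    · simp [L, mulVec_add, hAz]

theorem HoffEq_nonneg (A : Matrix (Fin m) (Fin n) ℝ) (C : Matrix (Fin p) (Fin n) ℝ) :
    0 ≤ HoffEq A C :=
  Real.sSup_nonneg <| by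
    rintro _ ⟨J, -, rfl⟩
    exact Real.sSup_nonneg <| by
      rintro _ ⟨w, -, rfl⟩
      exact Real.sInf_nonneg <| by
        rintro _ ⟨x, -, -, rfl⟩
        exact norm_nonneg x

theorem HJeq_le_HoffEq {J : Set (Fin p)} (hJ : RelSurjAC A C J) : HJeq A C J ≤ HoffEq A C :=
  le_csSup ((Set.finite_range fun J => HJeq A C J).subset <| by
    rintro _ ⟨J, -, rfl⟩; exact ⟨J, rfl⟩).bddAbove ⟨J, hJ, rfl⟩

theorem le_mul_HJeq {J : Set (Fin p)} {z : Fin n → ℝ} (hz : IsSlaterPoint A C J z)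
    {w : Fin p → ℝ} (hw : ‖w‖ ≤ 1) {δ D : ℝ} (hD : 0 ≤ D)
    (h : ∀ x, A *ᵥ x = 0 → (∀ i ∈ J, (C *ᵥ x) i ≤ w i) → δ ≤ D * ‖x‖) :
    δ ≤ D * HJeq A C J := by
  let S : (Fin p → ℝ) → Set ℝ := fun w =>
    {r | ∃ x : Fin n → ℝ, A *ᵥ x = 0 ∧ (∀ i ∈ J, (C *ᵥ x) i ≤ w i) ∧ r = ‖x‖}
  have hmem : ∀ w, ‖‖w‖ • z‖ ∈ S w := fun w =>
    ⟨_, (hz.norm_smul_feasible w).1, (hz.norm_smul_feasible w).2, rfl⟩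
  have hle : sInf (S w) ≤ HJeq A C J := by
    refine le_csSup ⟨‖z‖, ?_⟩ ⟨w, hw, rfl⟩
    rintro _ ⟨w', hw', rfl⟩
    refine csInf_le_of_le ⟨0, ?_⟩ (hmem w') ?_
    · rintro _ ⟨x, -, -, rfl⟩
      exact norm_nonneg x
    · rw [norm_smul, norm_norm]
      exact mul_le_of_le_one_left (norm_nonneg z) hw'
  refine le_trans ?_ (mul_le_mul_of_nonneg_left hle hD)
  rw [← smul_eq_mul, ← Real.sInf_smul_of_nonneg hD]
  refine le_csInf ((Set.nonempty_of_mem (hmem w)).smul_set) ?_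
  rintro _ ⟨_, ⟨x, hAx, hCx, rfl⟩, rfl⟩
  exact h x hAx hCx

theorem infDist_le_HoffEq_mul_dist {x₀ : Fin n → ℝ} (hAx₀ : A *ᵥ x₀ = b)
    (hCx₀ : ∀ i, (C *ᵥ x₀) i ≤ d i) {u : Fin n → ℝ} (hu : A *ᵥ u = b) {v : Fin p → ℝ}
    (hv : ∀ i, (C *ᵥ u) i ≤ v i) :
    infDist u {x | A *ᵥ x = b ∧ ∀ i, (C *ᵥ x) i ≤ d i} ≤ HoffEq A C * dist d v := by
  obtain ⟨J, z, hz, hJ⟩ := exists_isSlaterPoint_infDist_le hAx₀ hCx₀ u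
  set D := ‖d - v‖
  have hw : ‖D⁻¹ • (d - v)‖ ≤ 1 := by
    rw [norm_smul, norm_inv, norm_norm]
    exact inv_mul_le_one
  have hDw : ∀ i, D * (D⁻¹ • (d - v)) i = d i - v i := fun i => by
    rcases eq_or_ne D 0 with hD | hD
    · simp [sub_eq_zero.1 (norm_eq_zero.1 hD)]
    · simp [hD]
  have hHJ : D * HJeq A C J ≤ D * HoffEq A C :=
    mul_le_mul_of_nonneg_left (HJeq_le_HoffEq (relSurjAC_of_isSlaterPoint hz)) (norm_nonneg _)
  rw [dist_eq_norm, mul_comm]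
  refine le_trans (le_mul_HJeq hz hw (norm_nonneg _) fun x hAx hCx => ?_) hHJ
  have hCq : ∀ i ∈ J, (C *ᵥ (u + D • x)) i ≤ d i := fun i hi => by
    have := mul_le_mul_of_nonneg_left (hCx i hi) (norm_nonneg (d - v))
    simp only [mulVec_add, mulVec_smul, Pi.add_apply, Pi.smul_apply, smul_eq_mul]
    linarith [hv i, hDw i]
  calc _ ≤ dist (u + D • x) u := hJ _ (by simp [mulVec_add, mulVec_smul, hu, hAx]) hCq
    _ = D * ‖x‖ := by simp [norm_smul, D]

end Hoffman

/-- Proposition 7, bound part: with easy equations; for all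
`b, d` with `{x : Ax = b, Cx ≤ d} ≠ ∅` and all `u` with `Au = b`,
`dist(u, {x : Ax = b, Cx ≤ d}) ≤ H·dist(d, Cu + ℝ^p_+) ≤ H·‖(Cu − d)_+‖`. -/
theorem hoffman_easy_eq {m p n : ℕ} (A : Matrix (Fin m) (Fin n) ℝ)
    (C : Matrix (Fin p) (Fin n) ℝ) (b : Fin m → ℝ) (d : Fin p → ℝ)
    (hP : {x : Fin n → ℝ | A.mulVec x = b ∧ ∀ i, C.mulVec x i ≤ d i}.Nonempty)
    (u : Fin n → ℝ) (hu : A.mulVec u = b) :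
    infDist u {x : Fin n → ℝ | A.mulVec x = b ∧ ∀ i, C.mulVec x i ≤ d i} ≤
      HoffEq A C * infDist d
        {w : Fin p → ℝ | ∃ s : Fin p → ℝ, (∀ i, 0 ≤ s i) ∧ w = C.mulVec u + s} ∧
    HoffEq A C * infDist d
        {w : Fin p → ℝ | ∃ s : Fin p → ℝ, (∀ i, 0 ≤ s i) ∧ w = C.mulVec u + s} ≤
      HoffEq A C * ‖(fun i => max (C.mulVec u i - d i) 0 : Fin p → ℝ)‖ := by
  obtain ⟨x₀, hAx₀, hCx₀⟩ := hP
  rw [setOf_exists_nonneg_add_eq_Ici]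
  obtain ⟨v, hv, hdv⟩ := isClosed_Ici.exists_infDist_eq_dist Set.nonempty_Ici d
  refine ⟨?_, mul_le_mul_of_nonneg_left (infDist_Ici_le_norm_posPart _ d) (HoffEq_nonneg A C)⟩
  rw [hdv]
  exact infDist_le_HoffEq_mul_dist hAx₀ hCx₀ hu hv
end

section
/- A closed sublinear set-valued mapping Φ : ℝ^n ⇉ ℝ^m (one whose graph is a nonempty closed convex cone) is surjective (Φ(ℝ^n) = ℝ^m) if and only if the only v ∈ ℝ^m with (0,v) ∈ graph(Φ)* is v = 0, where graph(Φ)* := {(u,v) ∈ ℝ^n×ℝ^m : ⟨u,x⟩ + ⟨v,y⟩ ≥ 0 for all (x,y) ∈ graph(Φ)} is the dual cone of graph(Φ). -/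
/-!
The image `C` of the graph of `Φ` is a convex cone, and the dual condition says that no nonzero
linear functional is nonnegative on `C`. If some point lay outside the closure of `C`, the
closure would be a closed cone with `0` in it, and Farkas' lemma would give such a functional.
So `C` is dense, and a dense convex set in finite dimension is everything: its affine span is
closed, hence the whole space, so its interior is nonempty and equals the interior of its closure.
-/

open Set

theorem Convex.eq_univ_of_dense {E : Type*} [NormedAddCommGroup E] [NormedSpace ℝ E]
    [FiniteDimensional ℝ E] {s : Set E} (hs : Convex ℝ s) (hd : Dense s) : s = univ := by
  have hspan : affineSpan ℝ s = ⊤ := by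
    refine eq_top_iff.mpr fun x _ => ?_
    have : closure s ⊆ affineSpan ℝ s :=
      closure_minimal (subset_affineSpan ℝ s) (affineSpan ℝ s).closed_of_finiteDimensional
    exact this (hd.closure_eq ▸ mem_univ x)
  have hint := hs.interior_closure_eq_interior_of_nonempty_interior
    (hs.interior_nonempty_iff_affineSpan_eq_top.mpr hspan)
  rw [hd.closure_eq, interior_univ] at hint
  exact eq_univ_of_univ_subset (hint.symm ▸ interior_subset)

namespace ConvexCone

theorem coe_hull_of_convex_of_smul_mem {𝕜 M : Type*} [Field 𝕜] [LinearOrder 𝕜]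
    [IsStrictOrderedRing 𝕜] [AddCommGroup M] [Module 𝕜 M] {s : Set M} (hs : Convex 𝕜 s)
    (hcone : ∀ c : 𝕜, 0 < c → ∀ x ∈ s, c • x ∈ s) : (hull 𝕜 s : Set M) = s := by
  refine Subset.antisymm (fun x hx => ?_) subset_hull
  obtain ⟨c, hc, y, hy, rfl⟩ := (mem_hull_of_convex hs).mp hx
  exact hcone c hc y hy

section LocallyConvex

variable {E : Type*} [TopologicalSpace E] [AddCommGroup E] [IsTopologicalAddGroup E]
  [Module ℝ E] [ContinuousSMul ℝ E] [LocallyConvexSpace ℝ E]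

theorem dense_of_forall_nonneg_eq_zero {C : ConvexCone ℝ E} (hC : (C : Set E).Nonempty)
    (h : ∀ f : StrongDual ℝ E, (∀ x ∈ C, 0 ≤ f x) → f = 0) : Dense (C : Set E) := by
  obtain ⟨K, hK⟩ := canLift.prf C.closure ⟨hC.mono subset_closure, isClosed_closure⟩
  have hKC : (K : Set E) = closure C := congrArg SetLike.coe hK
  refine dense_iff_closure_eq.mpr (eq_univ_of_forall fun x => ?_)
  by_contra hx
  rw [← hKC] at hx
  obtain ⟨f, hf, hfx⟩ := K.hyperplane_separation_point hx
  have := h f fun y hy => hf y (by rw [← SetLike.mem_coe, hKC]; exact subset_closure hy)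
  simp [this] at hfx

end LocallyConvex

theorem coe_eq_univ_iff_forall_nonneg_eq_zero {E : Type*} [NormedAddCommGroup E]
    [NormedSpace ℝ E] [FiniteDimensional ℝ E] {C : ConvexCone ℝ E} (hC : (C : Set E).Nonempty) :
    (C : Set E) = univ ↔ ∀ f : Module.Dual ℝ E, (∀ x ∈ C, 0 ≤ f x) → f = 0 := by
  refine ⟨fun huniv f hf => ?_, fun h => ?_⟩
  · have hmem := eq_univ_iff_forall.mp huniv
    ext x
    exact le_antisymm (by simpa using hf (-x) (hmem _)) (hf x (hmem x))
  · refine C.convex.eq_univ_of_dense (dense_of_forall_nonneg_eq_zero hC fun f hf => ?_)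
    exact ContinuousLinearMap.coe_injective (h f hf)

end ConvexCone

theorem closed_sublinear_surjective_iff_general {n m : ℕ}
    (Φ : (Fin n → ℝ) → Set (Fin m → ℝ))
    (hne : {p : (Fin n → ℝ) × (Fin m → ℝ) | p.2 ∈ Φ p.1}.Nonempty)
    (hconv : Convex ℝ {p : (Fin n → ℝ) × (Fin m → ℝ) | p.2 ∈ Φ p.1})
    (hcone : ∀ c : ℝ, 0 < c → ∀ p ∈ {p : (Fin n → ℝ) × (Fin m → ℝ) | p.2 ∈ Φ p.1},
      c • p ∈ {p : (Fin n → ℝ) × (Fin m → ℝ) | p.2 ∈ Φ p.1}) :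
    (∀ y : Fin m → ℝ, ∃ x : Fin n → ℝ, y ∈ Φ x) ↔
      (∀ v : Fin m → ℝ,
        (∀ x y, y ∈ Φ x → 0 ≤ (∑ i, (0 : ℝ) * x i) + ∑ i, v i * y i) → v = 0) := by
  set C : ConvexCone ℝ (Fin m → ℝ) :=
    (ConvexCone.hull ℝ {p : (Fin n → ℝ) × (Fin m → ℝ) | p.2 ∈ Φ p.1}).map (LinearMap.snd ℝ _ _)
  have mem_C (y : Fin m → ℝ) : y ∈ C ↔ ∃ x, y ∈ Φ x := by
    simp [C, ← SetLike.mem_coe, ConvexCone.coe_hull_of_convex_of_smul_mem hconv hcone]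
  have hC : (C : Set (Fin m → ℝ)).Nonempty :=
    ⟨hne.some.2, (mem_C _).mpr ⟨_, hne.some_mem⟩⟩
  have surj_iff : (∀ y, ∃ x, y ∈ Φ x) ↔ (C : Set (Fin m → ℝ)) = univ := by
    simp [eq_univ_iff_forall, mem_C]
  rw [surj_iff, ConvexCone.coe_eq_univ_iff_forall_nonneg_eq_zero hC,
    ← (dotProductEquiv ℝ (Fin m)).toEquiv.forall_congr_right]
  refine forall_congr' fun v =>
    imp_congr ?_ (map_eq_zero_iff _ (dotProductEquiv ℝ (Fin m)).injective)
  simp only [LinearEquiv.coe_toEquiv, dotProductEquiv_apply_apply, dotProduct, mem_C,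
    zero_mul, Finset.sum_const_zero, zero_add, forall_exists_index]
  exact forall_comm

theorem closed_sublinear_surjective_iff {n m : ℕ}
    (Φ : (Fin n → ℝ) → Set (Fin m → ℝ))
    (hne : {p : (Fin n → ℝ) × (Fin m → ℝ) | p.2 ∈ Φ p.1}.Nonempty)
    (hclosed : IsClosed {p : (Fin n → ℝ) × (Fin m → ℝ) | p.2 ∈ Φ p.1})
    (hconv : Convex ℝ {p : (Fin n → ℝ) × (Fin m → ℝ) | p.2 ∈ Φ p.1})
    (hcone : ∀ c : ℝ, 0 < c → ∀ p ∈ {p : (Fin n → ℝ) × (Fin m → ℝ) | p.2 ∈ Φ p.1},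
      c • p ∈ {p : (Fin n → ℝ) × (Fin m → ℝ) | p.2 ∈ Φ p.1}) :
    (∀ y : Fin m → ℝ, ∃ x : Fin n → ℝ, y ∈ Φ x) ↔
      (∀ v : Fin m → ℝ,
        (∀ x y, y ∈ Φ x → 0 ≤ (∑ i, (0 : ℝ) * x i) + ∑ i, v i * y i) → v = 0) :=
  closed_sublinear_surjective_iff_general Φ hne hconv hcone
end
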